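/- Let M = {x ∈ ℝ⁴ : x² − x⁴ > 0}. A continuously differentiable covector field A : M → ℝ⁴ satisfies the invariance conditions L_ξA = 0 on M for ξ = e₁, ξ = e₃, ξ = e₂ + e₄ = (0,1,0,1) and ξ = e₂₄ = (0, x⁴, 0, x²) if and only if there exist constants C₁, C₂, C₃, C₄ ∈ ℝ such that for all x ∈ M: A₁(x) = C₁, A₃(x) = C₃, A₂(x) = C₂·(x²−x⁴) + C₄/(x²−x⁴) and A₄(x) = C₂·(x²−x⁴) − C₄/(x²−x⁴). (This is the class P₍₄,₅₎.) -/

import Mathlib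

open Real

/-- Partial derivative of a scalar function on ℝ⁴ in the j-th coordinate direction. -/
noncomputable def pd (j : Fin 4) (f : (Fin 4 → ℝ) → ℝ) (x : Fin 4 → ℝ) : ℝ :=
  fderiv ℝ f x (Pi.single j 1)

/-- The i-th component of the Lie derivative of the covector field A along
the vector field ξ at the point x:  Σ_j ξ^j ∂_j A_i + Σ_j A_j ∂_i ξ^j. -/
noncomputable def lieCov (ξ A : (Fin 4 → ℝ) → Fin 4 → ℝ) (x : Fin 4 → ℝ) (i : Fin 4) : ℝ :=
  (∑ j : Fin 4, ξ x j * pd j (fun y => A y i) x)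
    + ∑ j : Fin 4, A x j * pd i (fun y => ξ y j) x

/-- Invariance condition L_ξ A = 0 on all of ℝ⁴. -/
def PInvariant (ξ A : (Fin 4 → ℝ) → Fin 4 → ℝ) : Prop :=
  ∀ x i, lieCov ξ A x i = 0

/-- Invariance condition L_ξ A = 0 on a set M. -/
def PInvariantOn (ξ A : (Fin 4 → ℝ) → Fin 4 → ℝ) (M : Set (Fin 4 → ℝ)) : Prop :=
  ∀ x ∈ M, ∀ i, lieCov ξ A x i = 0

def e1 : (Fin 4 → ℝ) → Fin 4 → ℝ := fun _ => ![1, 0, 0, 0]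
def e2 : (Fin 4 → ℝ) → Fin 4 → ℝ := fun _ => ![0, 1, 0, 0]
def e3 : (Fin 4 → ℝ) → Fin 4 → ℝ := fun _ => ![0, 0, 1, 0]
def e4 : (Fin 4 → ℝ) → Fin 4 → ℝ := fun _ => ![0, 0, 0, 1]
def e12 : (Fin 4 → ℝ) → Fin 4 → ℝ := fun x => ![-x 1, x 0, 0, 0]
def e13 : (Fin 4 → ℝ) → Fin 4 → ℝ := fun x => ![x 2, 0, -x 0, 0]
def e23 : (Fin 4 → ℝ) → Fin 4 → ℝ := fun x => ![0, -x 2, x 1, 0]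
def e14 : (Fin 4 → ℝ) → Fin 4 → ℝ := fun x => ![x 3, 0, 0, x 0]
def e24 : (Fin 4 → ℝ) → Fin 4 → ℝ := fun x => ![0, x 3, 0, x 1]
def e34 : (Fin 4 → ℝ) → Fin 4 → ℝ := fun x => ![0, 0, x 3, x 2]

/- ### Auxiliary lemmas -/

lemma pd_const (j : Fin 4) (c : ℝ) (x : Fin 4 → ℝ) : pd j (fun _ => c) x = 0 := by
  simp [pd]

lemma pd_coord (j k : Fin 4) (x : Fin 4 → ℝ) :
    pd j (fun y => y k) x = (Pi.single j 1 : Fin 4 → ℝ) k := by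
  have h : (fun y : Fin 4 → ℝ => y k) = (ContinuousLinearMap.proj k : (Fin 4 → ℝ) →L[ℝ] ℝ) := rfl
  rw [pd, h, ContinuousLinearMap.fderiv]
  rfl

lemma pd_congr {f g : (Fin 4 → ℝ) → ℝ} {x : Fin 4 → ℝ} (j : Fin 4)
    (h : f =ᶠ[nhds x] g) : pd j f x = pd j g x := by
  simp [pd, h.fderiv_eq]

lemma fderiv_sum_pd (f : (Fin 4 → ℝ) → ℝ) (z v : Fin 4 → ℝ) :
    fderiv ℝ f z v = ∑ j, v j * pd j f z := by
  have hv : v = ∑ j, v j • (Pi.single j 1 : Fin 4 → ℝ) := by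
    ext k
    simp [Finset.sum_apply, Pi.single_apply]
  conv_lhs => rw [hv]
  rw [map_sum]
  simp [pd, smul_eq_mul]

lemma hasDerivAt_comp_line (f : (Fin 4 → ℝ) → ℝ) (x v : Fin 4 → ℝ) (t : ℝ)
    (hf : DifferentiableAt ℝ f (x + t • v)) :
    HasDerivAt (fun s => f (x + s • v)) (fderiv ℝ f (x + t • v) v) t := by
  have h1 : HasDerivAt (fun s : ℝ => x + s • v) v t := by
    simpa using ((hasDerivAt_id t).smul_const v).const_add x
  exact hf.hasFDerivAt.comp_hasDerivAt t h1

lemma const_of_deriv_zero_seg (f : (Fin 4 → ℝ) → ℝ) (x v : Fin 4 → ℝ)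
    (hd : ∀ t ∈ Set.Icc (0:ℝ) 1, HasDerivAt (fun s => f (x + s • v)) 0 t) :
    f (x + v) = f x := by
  have h := constant_of_has_deriv_right_zero (f := fun s => f (x + s • v)) (a := 0) (b := 1)
    (fun t ht => (hd t ht).continuousAt.continuousWithinAt)
    (fun t ht => (hd t ⟨ht.1, ht.2.le⟩).hasDerivWithinAt)
  have h1 := h 1 (by norm_num)
  simpa using h1

lemma const_on_Ioi (g : ℝ → ℝ) (h : ∀ u ∈ Set.Ioi (0:ℝ), HasDerivAt g 0 u) :
    ∀ u ∈ Set.Ioi (0:ℝ), g u = g 1 := by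
  have key : ∀ a b : ℝ, 0 < a → a ≤ b → g b = g a := by
    intro a b ha hab
    have := constant_of_has_deriv_right_zero (f := g) (a := a) (b := b)
      (fun t ht => (h t (lt_of_lt_of_le ha ht.1)).continuousAt.continuousWithinAt)
      (fun t ht => (h t (lt_of_lt_of_le ha ht.1)).hasDerivWithinAt)
    exact this b ⟨hab, le_rfl⟩
  intro u hu
  rcases le_total u 1 with h1 | h1
  · exact (key u 1 hu h1).symm
  · exact key 1 u one_pos h1

lemma oneD (c d u a : ℝ) (hu : u ≠ 0) :
    HasDerivAt (fun s : ℝ => c * (u + a * s) + d / (u + a * s)) (c * a - d * a / u ^ 2) 0 := by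
  have h1 : HasDerivAt (fun s : ℝ => u + a * s) a 0 := by
    simpa using ((hasDerivAt_id (0:ℝ)).const_mul a).const_add u
  have hc : HasDerivAt (fun s : ℝ => c * (u + a * s)) (c * a) 0 := h1.const_mul c
  have hd : HasDerivAt (fun s : ℝ => d / (u + a * s))
      ((0 * (u + a * 0) - d * a) / (u + a * 0) ^ 2) 0 :=
    (hasDerivAt_const 0 d).div h1 (by simpa using hu)
  have h2 := hc.add hd
  refine h2.congr_deriv ?_
  simp only [mul_zero, add_zero, zero_mul, zero_sub, neg_div]
  ring

lemma pd_eq_of (j : Fin 4) (f : (Fin 4 → ℝ) → ℝ) (x : Fin 4 → ℝ) (d : ℝ)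
    (hf : DifferentiableAt ℝ f x)
    (h : HasDerivAt (fun s : ℝ => f (x + s • (Pi.single j 1 : Fin 4 → ℝ))) d 0) :
    pd j f x = d := by
  have h2 := hasDerivAt_comp_line f x (Pi.single j 1) 0 (by simpa using hf)
  have e : x + (0:ℝ) • (Pi.single j 1 : Fin 4 → ℝ) = x := by simp
  rw [e] at h2
  exact h2.unique h

lemma diff_coordsub (x : Fin 4 → ℝ) :
    DifferentiableAt ℝ (fun y : Fin 4 → ℝ => y 1 - y 3) x := by
  fun_prop


lemma pd_form (j : Fin 4) (c d : ℝ) (x : Fin 4 → ℝ) (hu : x 1 - x 3 ≠ 0) :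
    pd j (fun y => c * (y 1 - y 3) + d / (y 1 - y 3)) x
      = (c - d / (x 1 - x 3) ^ 2) *
        ((Pi.single j 1 : Fin 4 → ℝ) 1 - (Pi.single j 1 : Fin 4 → ℝ) 3) := by
  set a : ℝ := (Pi.single j 1 : Fin 4 → ℝ) 1 - (Pi.single j 1 : Fin 4 → ℝ) 3 with ha
  apply pd_eq_of
  · apply DifferentiableAt.add
    · exact (diff_coordsub x).const_mul c
    · have h2 : DifferentiableAt ℝ (fun y : Fin 4 → ℝ => (y 1 - y 3)⁻¹) x :=
        (diff_coordsub x).inv hu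
      simpa [div_eq_mul_inv] using h2.const_mul d
  · have e : (fun s : ℝ =>
        (fun y => c * (y 1 - y 3) + d / (y 1 - y 3)) (x + s • (Pi.single j 1 : Fin 4 → ℝ)))
        = fun s => c * ((x 1 - x 3) + a * s) + d / ((x 1 - x 3) + a * s) := by
      funext s
      simp only [Pi.add_apply, Pi.smul_apply, smul_eq_mul, ha]
      ring_nf
    rw [e]
    have h := oneD c d (x 1 - x 3) a hu
    convert h using 1
    ring

def basePt (u : ℝ) : Fin 4 → ℝ := u • (Pi.single 1 1 : Fin 4 → ℝ)

lemma basePt_apply (u : ℝ) (j : Fin 4) :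
    basePt u j = u * (Pi.single 1 1 : Fin 4 → ℝ) j := rfl

lemma hasDerivAt_basePt (f : (Fin 4 → ℝ) → ℝ) (u : ℝ)
    (hf : DifferentiableAt ℝ f (basePt u)) :
    HasDerivAt (fun s => f (basePt s)) (pd 1 f (basePt u)) u := by
  have h := hasDerivAt_comp_line f 0 (Pi.single 1 1) u (by
    have e : (0:Fin 4 → ℝ) + u • (Pi.single 1 1 : Fin 4 → ℝ) = basePt u := by
      simp [basePt]
    rw [e]; exact hf)
  simp only [zero_add] at h
  exact h

/-- Class P_{4,5}, on the domain {x² - x⁴ > 0}. -/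
theorem class_P45 (A : (Fin 4 → ℝ) → Fin 4 → ℝ)
    (hA : ContDiffOn ℝ 1 A {x : Fin 4 → ℝ | 0 < x 1 - x 3}) :
    (PInvariantOn e1 A {x | 0 < x 1 - x 3} ∧
      PInvariantOn e3 A {x | 0 < x 1 - x 3} ∧
      PInvariantOn (fun _ => ![0, 1, 0, 1]) A {x | 0 < x 1 - x 3} ∧
      PInvariantOn e24 A {x | 0 < x 1 - x 3}) ↔
      ∃ C1 C2 C3 C4 : ℝ, ∀ x ∈ {x : Fin 4 → ℝ | 0 < x 1 - x 3},
        A x 0 = C1 ∧ A x 2 = C3 ∧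
        A x 1 = C2 * (x 1 - x 3) + C4 / (x 1 - x 3) ∧
        A x 3 = C2 * (x 1 - x 3) - C4 / (x 1 - x 3) := by
  set S : Set (Fin 4 → ℝ) := {x : Fin 4 → ℝ | 0 < x 1 - x 3} with hSdef
  have hSopen : IsOpen S := by
    have hc : Continuous fun x : Fin 4 → ℝ => x 1 - x 3 :=
      (continuous_apply 1).sub (continuous_apply 3)
    exact isOpen_lt continuous_const hc
  have hmemS : ∀ x : Fin 4 → ℝ, x ∈ S ↔ 0 < x 1 - x 3 := fun x => Iff.rfl
  have hdiffAt : ∀ (i : Fin 4) (z : Fin 4 → ℝ), z ∈ S → DifferentiableAt ℝ (fun y => A y i) z := by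
    intro i z hz
    have hd : DifferentiableAt ℝ A z :=
      (hA.differentiableOn one_ne_zero).differentiableAt (hSopen.mem_nhds hz)
    exact differentiableAt_pi.mp hd i
  have hconv : Convex ℝ S := by
    refine convex_halfSpace_gt ⟨fun a b => ?_, fun c a => ?_⟩ 0
    · show (a + b) 1 - (a + b) 3 = (a 1 - a 3) + (b 1 - b 3)
      simp only [Pi.add_apply]; ring
    · show (c • a) 1 - (c • a) 3 = c • (a 1 - a 3)
      simp only [Pi.smul_apply, smul_eq_mul]; ring
  have hbase : ∀ u : ℝ, 0 < u → basePt u ∈ S := by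
    intro u hu
    rw [hmemS]
    simp [basePt_apply, Pi.single_apply]
    exact hu
  constructor
  · rintro ⟨h1, h3, h24, hE24⟩
    -- pointwise PDE relations
    have R0 : ∀ x ∈ S, ∀ i : Fin 4, pd 0 (fun y => A y i) x = 0 := by
      intro x hx i
      have h := h1 x hx i
      simpa [lieCov, e1, Fin.sum_univ_four, pd_const] using h
    have R2 : ∀ x ∈ S, ∀ i : Fin 4, pd 2 (fun y => A y i) x = 0 := by
      intro x hx i
      have h := h3 x hx i
      simpa [lieCov, e3, Fin.sum_univ_four, pd_const] using h
    have R13 : ∀ x ∈ S, ∀ i : Fin 4,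
        pd 1 (fun y => A y i) x + pd 3 (fun y => A y i) x = 0 := by
      intro x hx i
      have h := h24 x hx i
      simpa [lieCov, Fin.sum_univ_four, pd_const] using h
    have R24 : ∀ x ∈ S, ∀ i : Fin 4,
        x 3 * pd 1 (fun y => A y i) x + x 1 * pd 3 (fun y => A y i) x
          + (A x 1 * (Pi.single i 1 : Fin 4 → ℝ) 3 + A x 3 * (Pi.single i 1 : Fin 4 → ℝ) 1)
          = 0 := by
      intro x hx i
      have h := hE24 x hx i
      simp only [lieCov, e24, Fin.sum_univ_four] at h
      simp only [Matrix.cons_val_zero, Matrix.cons_val_one, Matrix.head_cons,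
        Matrix.cons_val_two, Matrix.tail_cons, Matrix.cons_val_three] at h
      rw [pd_coord, pd_coord] at h
      simp only [pd_const, mul_zero, zero_mul, zero_add, add_zero, mul_one] at h ⊢
      linarith [h]
    -- for i = 0 and i = 2, all partials vanish
    have hflat : ∀ x ∈ S, ∀ i : Fin 4, (Pi.single i 1 : Fin 4 → ℝ) 3 = 0 →
        (Pi.single i 1 : Fin 4 → ℝ) 1 = 0 →
        ∀ j : Fin 4, pd j (fun y => A y i) x = 0 := by
      intro x hx i h3' h1'
      have hr := R24 x hx i
      rw [h3', h1'] at hr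
      have hr13 := R13 x hx i
      have hxne : x 1 - x 3 ≠ 0 := ne_of_gt ((hmemS x).mp hx)
      have hp1 : pd 1 (fun y => A y i) x = 0 := by
        have key : (x 3 - x 1) * pd 1 (fun y => A y i) x = 0 := by
          linear_combination hr - x 1 * hr13
        rcases mul_eq_zero.mp key with h' | h'
        · exact absurd h' (by intro hh; apply hxne; linarith)
        · exact h'
      have hp3 : pd 3 (fun y => A y i) x = 0 := by linarith
      intro j
      fin_cases j
      · exact R0 x hx i
      · exact hp1
      · exact R2 x hx i
      · exact hp3
    -- segment argument
    have seg : ∀ (i : Fin 4) (x y : Fin 4 → ℝ), x ∈ S → y ∈ S →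
        (∀ z ∈ S, (∑ j, (y - x) j * pd j (fun w => A w i) z) = 0) → A y i = A x i := by
      intro i x y hx hy hz
      have hmem : ∀ t ∈ Set.Icc (0:ℝ) 1, x + t • (y - x) ∈ S := by
        intro t ht
        have h := hconv hx hy (by linarith [ht.2] : (0:ℝ) ≤ 1 - t) ht.1 (by ring)
        have e : (1 - t) • x + t • y = x + t • (y - x) := by
          ext j
          simp only [Pi.add_apply, Pi.smul_apply, Pi.sub_apply, smul_eq_mul]
          ring
        rwa [e] at h
      have hder : ∀ t ∈ Set.Icc (0:ℝ) 1,
          HasDerivAt (fun s => A (x + s • (y - x)) i) 0 t := by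
        intro t ht
        have h := hasDerivAt_comp_line (fun w => A w i) x (y - x) t
          (hdiffAt i _ (hmem t ht))
        rwa [fderiv_sum_pd, hz _ (hmem t ht)] at h
      have h := const_of_deriv_zero_seg (fun w => A w i) x (y - x) hder
      simpa using h
    -- A·0 and A·2 are constant
    have hconst : ∀ i : Fin 4, (Pi.single i 1 : Fin 4 → ℝ) 3 = 0 →
        (Pi.single i 1 : Fin 4 → ℝ) 1 = 0 →
        ∀ x ∈ S, A x i = A (basePt 1) i := by
      intro i h3' h1' x hx
      refine seg i (basePt 1) x (hbase 1 one_pos) hx ?_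
      intro z hz
      simp [Fin.sum_univ_four, hflat z hz i h3' h1']
    -- A·1 and A·3 depend only on u = x1 - x3
    have hred : ∀ i : Fin 4, ∀ x ∈ S, A x i = A (basePt (x 1 - x 3)) i := by
      intro i x hx
      have hu : 0 < x 1 - x 3 := (hmemS x).mp hx
      refine (seg i x (basePt (x 1 - x 3)) hx (hbase _ hu) ?_).symm
      intro z hz
      have e0 : (basePt (x 1 - x 3) - x) 0 = -x 0 := by
        simp [basePt_apply, Pi.single_apply]
      have e1' : (basePt (x 1 - x 3) - x) 1 = -x 3 := by
        simp [basePt_apply, Pi.single_apply]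
      have e2 : (basePt (x 1 - x 3) - x) 2 = -x 2 := by
        simp [basePt_apply, Pi.single_apply]
      have e3' : (basePt (x 1 - x 3) - x) 3 = -x 3 := by
        simp [basePt_apply, Pi.single_apply]
      rw [Fin.sum_univ_four, e0, e1', e2, e3', R0 z hz i, R2 z hz i]
      have := R13 z hz i
      linear_combination (-(x 3)) * this
    -- the one-dimensional functions
    set φ : ℝ → ℝ := fun u => A (basePt u) 1 with hφdef
    set ψ : ℝ → ℝ := fun u => A (basePt u) 3 with hψdef
    have hval1 : ∀ u : ℝ, 0 < u → pd 1 (fun y => A y 1) (basePt u) = ψ u / u := by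
      intro u hu
      have hr := R24 (basePt u) (hbase u hu) 1
      have hr13 := R13 (basePt u) (hbase u hu) 1
      have hb1 : basePt u 1 = u := by simp [basePt_apply, Pi.single_apply]
      have hb3 : basePt u 3 = 0 := by simp [basePt_apply, Pi.single_apply]
      rw [hb1, hb3] at hr
      simp only [Pi.single_eq_same, Pi.single_eq_of_ne (by decide : (3:Fin 4) ≠ 1)] at hr
      field_simp
      linear_combination (-1 : ℝ) * hr + u * hr13
    have hval3 : ∀ u : ℝ, 0 < u → pd 1 (fun y => A y 3) (basePt u) = φ u / u := by
      intro u hu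
      have hr := R24 (basePt u) (hbase u hu) 3
      have hr13 := R13 (basePt u) (hbase u hu) 3
      have hb1 : basePt u 1 = u := by simp [basePt_apply, Pi.single_apply]
      have hb3 : basePt u 3 = 0 := by simp [basePt_apply, Pi.single_apply]
      rw [hb1, hb3] at hr
      simp only [Pi.single_eq_same, Pi.single_eq_of_ne (by decide : (1:Fin 4) ≠ 3)] at hr
      field_simp
      linear_combination (-1 : ℝ) * hr + u * hr13
    have hφd : ∀ u ∈ Set.Ioi (0:ℝ), HasDerivAt φ (ψ u / u) u := by
      intro u hu
      have h := hasDerivAt_basePt (fun y => A y 1) u (hdiffAt 1 _ (hbase u hu))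
      rwa [hval1 u hu] at h
    have hψd : ∀ u ∈ Set.Ioi (0:ℝ), HasDerivAt ψ (φ u / u) u := by
      intro u hu
      have h := hasDerivAt_basePt (fun y => A y 3) u (hdiffAt 3 _ (hbase u hu))
      rwa [hval3 u hu] at h
    -- solve the ODE system
    have hP : ∀ u ∈ Set.Ioi (0:ℝ), (φ u + ψ u) / u = (φ 1 + ψ 1) / 1 := by
      apply const_on_Ioi
      intro u hu
      have hu' : (u:ℝ) ≠ 0 := ne_of_gt hu
      have h := ((hφd u hu).add (hψd u hu)).div (hasDerivAt_id u) hu'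
      refine h.congr_deriv ?_
      simp only [id_eq, Pi.add_apply, Pi.sub_apply]
      field_simp
      try ring
    have hQ : ∀ u ∈ Set.Ioi (0:ℝ), (φ u - ψ u) * u = (φ 1 - ψ 1) * 1 := by
      apply const_on_Ioi
      intro u hu
      have hu' : (u:ℝ) ≠ 0 := ne_of_gt hu
      have h := ((hφd u hu).sub (hψd u hu)).mul (hasDerivAt_id u)
      refine h.congr_deriv ?_
      simp only [id_eq, Pi.add_apply, Pi.sub_apply]
      field_simp
      try ring
    refine ⟨A (basePt 1) 0, (φ 1 + ψ 1) / 2, A (basePt 1) 2, (φ 1 - ψ 1) / 2, ?_⟩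
    intro x hx
    have hu : 0 < x 1 - x 3 := (hmemS x).mp hx
    have hu' : x 1 - x 3 ≠ 0 := ne_of_gt hu
    have hP' := hP (x 1 - x 3) hu
    have hQ' := hQ (x 1 - x 3) hu
    have h1' : φ (x 1 - x 3) + ψ (x 1 - x 3) = (φ 1 + ψ 1) * (x 1 - x 3) := by
      field_simp at hP'
      linarith
    have h2' : (φ (x 1 - x 3) - ψ (x 1 - x 3)) * (x 1 - x 3) = φ 1 - ψ 1 := by
      linarith [hQ']
    have e2 : (φ 1 - ψ 1) / 2 / (x 1 - x 3)
        = (φ (x 1 - x 3) - ψ (x 1 - x 3)) / 2 := by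
      rw [← h2']
      field_simp
    refine ⟨hconst 0 (by simp [Pi.single_apply]) (by simp [Pi.single_apply]) x hx,
      hconst 2 (by simp [Pi.single_apply]) (by simp [Pi.single_apply]) x hx, ?_, ?_⟩
    · rw [hred 1 x hx]
      show φ (x 1 - x 3) = _
      rw [e2]
      linear_combination h1' / 2
    · rw [hred 3 x hx]
      show ψ (x 1 - x 3) = _
      rw [e2]
      linear_combination h1' / 2
  · rintro ⟨C1, C2, C3, C4, hform⟩
    -- pd values on S
    have hpd0 : ∀ x ∈ S, ∀ j : Fin 4, pd j (fun y => A y 0) x = 0 := by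
      intro x hx j
      have hev : (fun y => A y 0) =ᶠ[nhds x] (fun _ => C1) :=
        Filter.eventuallyEq_of_mem (hSopen.mem_nhds hx) (fun y hy => (hform y hy).1)
      rw [pd_congr j hev, pd_const]
    have hpd2 : ∀ x ∈ S, ∀ j : Fin 4, pd j (fun y => A y 2) x = 0 := by
      intro x hx j
      have hev : (fun y => A y 2) =ᶠ[nhds x] (fun _ => C3) :=
        Filter.eventuallyEq_of_mem (hSopen.mem_nhds hx) (fun y hy => (hform y hy).2.1)
      rw [pd_congr j hev, pd_const]
    have hpd1 : ∀ x ∈ S, ∀ j : Fin 4, pd j (fun y => A y 1) x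
        = (C2 - C4 / (x 1 - x 3) ^ 2) *
          ((Pi.single j 1 : Fin 4 → ℝ) 1 - (Pi.single j 1 : Fin 4 → ℝ) 3) := by
      intro x hx j
      have hu' : x 1 - x 3 ≠ 0 := ne_of_gt ((hmemS x).mp hx)
      have hev : (fun y => A y 1) =ᶠ[nhds x]
          (fun y => C2 * (y 1 - y 3) + C4 / (y 1 - y 3)) :=
        Filter.eventuallyEq_of_mem (hSopen.mem_nhds hx) (fun y hy => (hform y hy).2.2.1)
      rw [pd_congr j hev, pd_form j C2 C4 x hu']
    have hpd3 : ∀ x ∈ S, ∀ j : Fin 4, pd j (fun y => A y 3) x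
        = (C2 + C4 / (x 1 - x 3) ^ 2) *
          ((Pi.single j 1 : Fin 4 → ℝ) 1 - (Pi.single j 1 : Fin 4 → ℝ) 3) := by
      intro x hx j
      have hu' : x 1 - x 3 ≠ 0 := ne_of_gt ((hmemS x).mp hx)
      have hev : (fun y => A y 3) =ᶠ[nhds x]
          (fun y => C2 * (y 1 - y 3) + (-C4) / (y 1 - y 3)) := by
        refine Filter.eventuallyEq_of_mem (hSopen.mem_nhds hx) (fun y hy => ?_)
        rw [(hform y hy).2.2.2]
        rw [neg_div]
        ring
      rw [pd_congr j hev, pd_form j C2 (-C4) x hu']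
      ring
    have hsingle : ∀ j : Fin 4, (Pi.single j 1 : Fin 4 → ℝ) 1 - (Pi.single j 1 : Fin 4 → ℝ) 3
        = if j = 1 then 1 else if j = 3 then -1 else 0 := by
      intro j
      fin_cases j <;> simp [Pi.single_apply]
    refine ⟨?_, ?_, ?_, ?_⟩
    · intro x hx i
      fin_cases i <;>
        simp [lieCov, e1, Fin.sum_univ_four, pd_const,
          hpd0 x hx, hpd1 x hx, hpd2 x hx, hpd3 x hx, hsingle]
    · intro x hx i
      fin_cases i <;>
        simp [lieCov, e3, Fin.sum_univ_four, pd_const,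
          hpd0 x hx, hpd1 x hx, hpd2 x hx, hpd3 x hx, hsingle]
    · intro x hx i
      fin_cases i <;>
        simp [lieCov, Fin.sum_univ_four, pd_const,
          hpd0 x hx, hpd1 x hx, hpd2 x hx, hpd3 x hx, hsingle] <;> ring
    · intro x hx i
      have hu : 0 < x 1 - x 3 := (hmemS x).mp hx
      have hu' : x 1 - x 3 ≠ 0 := ne_of_gt hu
      have hA1 := (hform x hx).2.2.1
      have hA3 := (hform x hx).2.2.2
      fin_cases i <;>
        simp [lieCov, e24, Fin.sum_univ_four, pd_const, pd_coord,
          hpd0 x hx, hpd1 x hx, hpd2 x hx, hpd3 x hx, hsingle, hA1, hA3,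
          Pi.single_apply] <;>
        field_simp <;> ring
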